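/- Let f : ℝⁿ → ℝ be convex with an L-Lipschitz continuous gradient, let X ⊆ ℝⁿ be closed convex, and suppose a minimizer x* of f over X exists. Then the projected gradient iterates x^{k+1} = Π_X(x^k − α∇f(x^k)) with fixed stepsize α ∈ (0, 1/L] satisfy f(x^k) − f(x*) = O(1/k); more precisely f(x^k) − f(x*) ≤ ‖x⁰ − x*‖²/(2αk) for all k ≥ 1. -/

import Mathlib

/-!
For every `z ∈ X`, one projected-gradient step with stepsize `α ≤ 1/L` satisfies
`2α (f(x_{k+1}) - f(z)) ≤ ‖x_k - z‖² - ‖x_{k+1} - z‖²`: this combines the descent lemma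
coming from the Lipschitz gradient, the first-order convexity inequality at `x_k`, and the
variational inequality characterising the projection. Taking `z = x_k` shows that `f(x_k)` is
nonincreasing; taking `z = x*` and summing, the right-hand sides telescope, so
`2αk (f(x_k) - f(x*)) ≤ ‖x_0 - x*‖²`.
-/

open RealInnerProductSpace AffineMap

theorem Convex.real_inner_sub_sub_nonpos_of_forall_norm_sub_le {F : Type*}
    [NormedAddCommGroup F] [InnerProductSpace ℝ F] {K : Set F} (hK : Convex ℝ K) {u v : F}
    (hv : v ∈ K) (hmin : ∀ w ∈ K, ‖u - v‖ ≤ ‖u - w‖) : ∀ w ∈ K, ⟪u - v, w - v⟫ ≤ 0 := by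
  have : Nonempty K := ⟨⟨v, hv⟩⟩
  refine (norm_eq_iInf_iff_real_inner_le_zero hK hv).mp (le_antisymm ?_ ?_)
  · exact le_ciInf fun w => hmin w w.2
  · exact ciInf_le ⟨0, Set.forall_mem_range.mpr fun _ => norm_nonneg _⟩ (⟨v, hv⟩ : K)

theorem Antitone.natCast_mul_le_of_le_sub_succ {u d : ℕ → ℝ} (hu : Antitone u)
    (hstep : ∀ k, u (k + 1) ≤ d k - d (k + 1)) (k : ℕ) : k * u k ≤ d 0 - d k := by
  induction k with
  | zero => simp
  | succ k ih =>
    push_cast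
    linarith [mul_le_mul_of_nonneg_left (hu k.le_succ) k.cast_nonneg, hstep k]

section GradientInequalities

variable {E : Type*} [NormedAddCommGroup E] [InnerProductSpace ℝ E] [CompleteSpace E]
  {f : E → ℝ} {f' : E → E}

theorem HasGradientAt.hasDerivAt_comp_lineMap {g x y : E} {t : ℝ}
    (hf : HasGradientAt f g (lineMap x y t)) :
    HasDerivAt (f ∘ lineMap x y) ⟪g, y - x⟫ t :=
  hf.hasFDerivAt.comp_hasDerivAt t hasDerivAt_lineMap

theorem ConvexOn.inner_gradient_le_sub (hf : ConvexOn ℝ Set.univ f) {g x : E}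
    (hg : HasGradientAt f g x) (y : E) : ⟪g, y - x⟫ ≤ f y - f x := by
  have hline : ConvexOn ℝ Set.univ (f ∘ lineMap (k := ℝ) x y) := hf.comp_affineMap _
  have hderiv : HasDerivAt (f ∘ lineMap x y) ⟪g, y - x⟫ (0 : ℝ) :=
    HasGradientAt.hasDerivAt_comp_lineMap (by rwa [lineMap_apply_zero])
  simpa [slope_def_field] using
    hline.le_slope_of_hasDerivAt (Set.mem_univ 0) (Set.mem_univ 1) one_pos hderiv

theorem le_add_inner_add_of_lipschitz_gradient {L : ℝ} (hgrad : ∀ z, HasGradientAt f (f' z) z)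
    (hlip : ∀ z w, ‖f' z - f' w‖ ≤ L * ‖z - w‖) (x y : E) :
    f y ≤ f x + ⟪f' x, y - x⟫ + L / 2 * ‖y - x‖ ^ 2 := by
  set c := ⟪f' x, y - x⟫
  set q := ‖y - x‖ ^ 2
  let h : ℝ → ℝ := fun t => f (lineMap x y t) - t * c - L / 2 * q * t ^ 2
  have hderiv (t : ℝ) : HasDerivAt h (⟪f' (lineMap x y t) - f' x, y - x⟫ - L * t * q) t := by
    have := ((hgrad (lineMap x y t)).hasDerivAt_comp_lineMap.sub
      ((hasDerivAt_id t).mul_const c)).sub ((hasDerivAt_pow 2 t).const_mul (L / 2 * q))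
    exact this.congr_deriv (by rw [inner_sub_left]; ring)
  have hinner {t : ℝ} (ht : 0 < t) : ⟪f' (lineMap x y t) - f' x, y - x⟫ ≤ L * t * q :=
    calc ⟪f' (lineMap x y t) - f' x, y - x⟫ ≤ ‖f' (lineMap x y t) - f' x‖ * ‖y - x‖ :=
          real_inner_le_norm _ _
      _ ≤ L * ‖lineMap x y t - x‖ * ‖y - x‖ := by gcongr; exact hlip _ _
      _ = L * t * q := by
          rw [← vsub_eq_sub, lineMap_vsub_left, vsub_eq_sub, norm_smul, Real.norm_of_nonneg ht.le]
          ring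
  have hdiff : Differentiable ℝ h := fun t => (hderiv t).differentiableAt
  have hanti : AntitoneOn h (Set.Icc 0 1) := by
    refine antitoneOn_of_deriv_nonpos (convex_Icc 0 1) hdiff.continuous.continuousOn
      hdiff.differentiableOn fun t ht => ?_
    rw [interior_Icc] at ht
    rw [(hderiv t).deriv]
    linarith [hinner ht.1]
  have := hanti (Set.left_mem_Icc.mpr zero_le_one) (Set.right_mem_Icc.mpr zero_le_one) zero_le_one
  simp only [h, lineMap_apply_zero, lineMap_apply_one] at this
  linarith

theorem projected_gradient_step_le {L α : ℝ} {K : Set E}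
    (hconv : ConvexOn ℝ Set.univ f) (hgrad : ∀ z, HasGradientAt f (f' z) z)
    (hlip : ∀ z w, ‖f' z - f' w‖ ≤ L * ‖z - w‖) (hK : Convex ℝ K) (hα : 0 ≤ α)
    (hαL : α * L ≤ 1) {a b z : E} (hb : b ∈ K)
    (hproj : ∀ w ∈ K, ‖a - α • f' a - b‖ ≤ ‖a - α • f' a - w‖) (hz : z ∈ K) :
    2 * α * (f b - f z) ≤ ‖a - z‖ ^ 2 - ‖b - z‖ ^ 2 := by
  set g := f' a
  have hdesc := le_add_inner_add_of_lipschitz_gradient hgrad hlip a b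
  have hsupport := hconv.inner_gradient_le_sub (hgrad a) z
  have hvi := hK.real_inner_sub_sub_nonpos_of_forall_norm_sub_le hb hproj z hz
  have hsplit : ⟪g, b - a⟫ = ⟪g, b - z⟫ + ⟪g, z - a⟫ := by
    rw [← inner_add_right, sub_add_sub_cancel]
  have hvi' : ⟪a - α • g - b, z - b⟫ = α * ⟪g, b - z⟫ - ⟪a - b, b - z⟫ := by
    rw [← neg_sub b z, inner_neg_right, sub_right_comm, inner_sub_left, real_inner_smul_left]
    ring
  have hsq : ‖a - z‖ ^ 2 = ‖a - b‖ ^ 2 + 2 * ⟪a - b, b - z⟫ + ‖b - z‖ ^ 2 := by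
    rw [← norm_add_sq_real, sub_add_sub_cancel]
  have hαL_sq : α * L * ‖a - b‖ ^ 2 ≤ ‖a - b‖ ^ 2 := mul_le_of_le_one_left (sq_nonneg _) hαL
  have hgap : f b - f z ≤ ⟪g, b - z⟫ + L / 2 * ‖a - b‖ ^ 2 := by
    rw [norm_sub_rev] at hdesc
    linarith
  linarith [mul_le_mul_of_nonneg_left hgap (by positivity : (0 : ℝ) ≤ 2 * α)]

end GradientInequalities

theorem projected_gradient_rate_general (n : ℕ) (f : EuclideanSpace ℝ (Fin n) → ℝ)
    (f' : EuclideanSpace ℝ (Fin n) → EuclideanSpace ℝ (Fin n))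
    (L : ℝ)
    (hconv : ConvexOn ℝ Set.univ f)
    (hgrad : ∀ z, HasGradientAt f (f' z) z)
    (hlip : ∀ z w, ‖f' z - f' w‖ ≤ L * ‖z - w‖)
    (X : Set (EuclideanSpace ℝ (Fin n))) (hXconv : Convex ℝ X)
    (xstar : EuclideanSpace ℝ (Fin n)) (hxstar : xstar ∈ X)
    (α : ℝ) (hα0 : 0 < α) (hαL : α ≤ 1/L)
    (x : ℕ → EuclideanSpace ℝ (Fin n)) (hx0 : x 0 ∈ X)
    (hiter : ∀ k, x (k+1) ∈ X ∧
      ∀ z ∈ X, ‖x k - α • f' (x k) - x (k+1)‖ ≤ ‖x k - α • f' (x k) - z‖) :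
    ∀ k : ℕ, 1 ≤ k → f (x k) - f xstar ≤ ‖x 0 - xstar‖^2 / (2 * α * k) := by
  intro k hk
  have hL : 0 < L := one_div_pos.mp (hα0.trans_le hαL)
  have hmem (k : ℕ) : x k ∈ X := Nat.casesOn k hx0 fun k => (hiter k).1
  have hstep (k : ℕ) {z} (hz : z ∈ X) :
      2 * α * (f (x (k + 1)) - f z) ≤ ‖x k - z‖ ^ 2 - ‖x (k + 1) - z‖ ^ 2 :=
    projected_gradient_step_le hconv hgrad hlip hXconv hα0.le ((le_div_iff₀ hL).mp hαL)
      (hiter k).1 (hiter k).2 hz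
  have hanti : Antitone fun k => 2 * α * (f (x k) - f xstar) := by
    refine antitone_nat_of_succ_le fun k => ?_
    have := hstep k (hmem k)
    rw [sub_self, norm_zero] at this
    linarith [sq_nonneg ‖x (k + 1) - x k‖]
  have htel := hanti.natCast_mul_le_of_le_sub_succ (fun k => hstep k hxstar) k
  have hk' : (0 : ℝ) < k := by exact_mod_cast hk
  rw [le_div_iff₀ (by positivity)]
  linarith [sq_nonneg ‖x k - xstar‖]

/-- Projected gradient method: for convex `f` with `L`-Lipschitz gradient, a closed
convex set `X`, a minimizer `x*` of `f` over `X`, and fixed stepsize `α ∈ (0, 1/L]`,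
the iterates `x^{k+1} = Π_X(x^k − α ∇f(x^k))` satisfy
`f(x^k) − f(x*) ≤ ‖x⁰ − x*‖²/(2αk)` for all `k ≥ 1`. -/
theorem projected_gradient_rate (n : ℕ) (f : EuclideanSpace ℝ (Fin n) → ℝ)
    (f' : EuclideanSpace ℝ (Fin n) → EuclideanSpace ℝ (Fin n))
    (L : ℝ) (hL : 0 < L)
    (hconv : ConvexOn ℝ Set.univ f)
    (hgrad : ∀ z, HasGradientAt f (f' z) z)
    (hlip : ∀ z w, ‖f' z - f' w‖ ≤ L * ‖z - w‖)
    (X : Set (EuclideanSpace ℝ (Fin n))) (hXc : IsClosed X) (hXconv : Convex ℝ X)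
    (xstar : EuclideanSpace ℝ (Fin n)) (hxstar : xstar ∈ X)
    (hmin : ∀ z ∈ X, f xstar ≤ f z)
    (α : ℝ) (hα0 : 0 < α) (hαL : α ≤ 1/L)
    (x : ℕ → EuclideanSpace ℝ (Fin n)) (hx0 : x 0 ∈ X)
    (hiter : ∀ k, x (k+1) ∈ X ∧
      ∀ z ∈ X, ‖x k - α • f' (x k) - x (k+1)‖ ≤ ‖x k - α • f' (x k) - z‖) :
    ∀ k : ℕ, 1 ≤ k → f (x k) - f xstar ≤ ‖x 0 - xstar‖^2 / (2 * α * k) :=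
  projected_gradient_rate_general n f f' L hconv hgrad hlip X hXconv xstar hxstar α hα0 hαL x hx0
    hiter
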